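/- Let φ ∈ L^∞(𝕋) with harmonic extension Φ on 𝔻, and for 0 < r < 1 let Φ_r be the harmonic extension of the Poisson convolution φ_r. Then Φ_r(z) = Φ(rz) for z ∈ 𝔻; consequently, for every w ∈ ℂ, #(Φ_r⁻¹({w}) ∩ 𝔻) ≤ #(Φ⁻¹({w}) ∩ 𝔻), and if #(Φ⁻¹({w}) ∩ 𝔻) < ∞ then the signed multiplicities satisfy m_{Φ_r}(w) → m_Φ(w) as r ↗ 1 for almost every such w. -/
import Mathlib


open MeasureTheory AddCircle Complex Filter Topology ComplexConjugate ContinuousLinearMap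

noncomputable section

namespace HH

local notation "𝕋" => AddCircle (2 * Real.pi)

instance : Fact (0 < 2 * Real.pi) := ⟨by positivity⟩

/-- Normalized Haar (Lebesgue) measure on the circle. -/
abbrev μT : Measure (AddCircle (2 * Real.pi)) := haarAddCircle
abbrev Linf : Type := Lp ℂ ⊤ μT

/-- The open unit disc in `ℂ`. -/
def disc : Set ℂ := Metric.ball (0 : ℂ) 1

/-- The Wirtinger derivative `∂Φ/∂z = (Φ_x - iΦ_y)/2`. -/
def wirtZ (Φ : ℂ → ℂ) (z : ℂ) : ℂ :=
  (fderiv ℝ Φ z 1 - Complex.I * fderiv ℝ Φ z Complex.I) / 2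

/-- The Wirtinger derivative `∂Φ/∂z̄ = (Φ_x + iΦ_y)/2`. -/
def wirtZbar (Φ : ℂ → ℂ) (z : ℂ) : ℂ :=
  (fderiv ℝ Φ z 1 + Complex.I * fderiv ℝ Φ z Complex.I) / 2

/-- The Jacobian `J(Φ) = |∂Φ/∂z|² - |∂Φ/∂z̄|²`. -/
def jac (Φ : ℂ → ℂ) (z : ℂ) : ℝ := ‖wirtZ Φ z‖ ^ 2 - ‖wirtZbar Φ z‖ ^ 2

/-- The signed multiplicity function `m_Φ(w) = Σ_{z ∈ 𝔻, Φ(z) = w} sgn(J(Φ)(z))`. -/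
def mult (Φ : ℂ → ℂ) (w : ℂ) : ℝ :=
  ∑' z : ↥(disc ∩ Φ ⁻¹' {w}), Real.sign (jac Φ (z : ℂ))

/-- The defining property of the Poisson convolution `φ_r`: its Fourier coefficients
are `r^{|k|} φ̂(k)`. -/
def IsPoissonConv (φ : Linf) (r : ℝ) (φr : Linf) : Prop :=
  ∀ k : ℤ, fourierCoeff (⇑φr) k = ((r ^ k.natAbs : ℝ) : ℂ) * fourierCoeff (⇑φ) k

/-- The harmonic extension `Φ(z) = Σ_{k≥0} φ̂(k) zᵏ + Σ_{k>0} φ̂(-k) z̄ᵏ` on the unit disc. -/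
def hext (φ : AddCircle (2 * Real.pi) → ℂ) (z : ℂ) : ℂ :=
  (∑' k : ℕ, fourierCoeff φ (k : ℤ) * z ^ k) +
    ∑' k : ℕ, fourierCoeff φ (-((k : ℤ) + 1)) * (starRingEnd ℂ z) ^ (k + 1)


private lemma fderiv_mul_left' (c : ℂ) (x : ℂ) :
    fderiv ℝ (fun z : ℂ => c * z) x = ContinuousLinearMap.mul ℝ ℂ c :=
  (ContinuousLinearMap.mul ℝ ℂ c).fderiv

private lemma sign_sq_mul (ρ : ℝ) (x : ℝ) (hρ : ρ ≠ 0) :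
    Real.sign (ρ^2 * x) = Real.sign x := by
  rcases lt_trichotomy x 0 with h|h|h
  · rw [Real.sign_of_neg h, Real.sign_of_neg (by nlinarith [sq_pos_of_ne_zero hρ, sq_nonneg ρ, abs_pos.mpr hρ, _root_.sq_abs ρ])]
  · simp [h]
  · rw [Real.sign_of_pos h, Real.sign_of_pos (by positivity)]

private lemma jac_scale (Φ : ℂ → ℂ) (ρ : ℝ) (hρ : ρ ≠ 0) (z : ℂ) :
    jac (fun y : ℂ => Φ ((ρ:ℂ) * y)) z = ρ^2 * jac Φ ((ρ:ℂ) * z) := by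
  set c : ℂ := (ρ:ℂ) with hc
  have hcne : c ≠ 0 := by simp [hc, hρ]
  by_cases hΦ : DifferentiableAt ℝ Φ (c * z)
  · have hM : DifferentiableAt ℝ (fun y : ℂ => c * y) z :=
      ((ContinuousLinearMap.mul ℝ ℂ c).differentiableAt)
    have h1 : fderiv ℝ (fun y : ℂ => Φ (c * y)) z
        = (fderiv ℝ Φ (c * z)).comp (ContinuousLinearMap.mul ℝ ℂ c) := by
      have := fderiv_comp (𝕜 := ℝ) z (g := Φ) (f := fun y : ℂ => c * y) (by simpa using hΦ) hM
      simpa [Function.comp_def, fderiv_mul_left'] using this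
    have happ : ∀ v : ℂ, fderiv ℝ (fun y : ℂ => Φ (c * y)) z v
        = ρ • fderiv ℝ Φ (c * z) v := by
      intro v
      rw [h1]
      simp only [ContinuousLinearMap.comp_apply, ContinuousLinearMap.mul_apply']
      rw [show c * v = ρ • v by simp [hc, Complex.real_smul], _root_.map_smul]
    simp only [jac, wirtZ, wirtZbar, happ]
    have e1 : (ρ • fderiv ℝ Φ (c*z) 1 - Complex.I * (ρ • fderiv ℝ Φ (c*z) Complex.I)) / 2
        = ρ • ((fderiv ℝ Φ (c*z) 1 - Complex.I * fderiv ℝ Φ (c*z) Complex.I) / 2) := by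
      simp [Complex.real_smul]; ring
    have e2 : (ρ • fderiv ℝ Φ (c*z) 1 + Complex.I * (ρ • fderiv ℝ Φ (c*z) Complex.I)) / 2
        = ρ • ((fderiv ℝ Φ (c*z) 1 + Complex.I * fderiv ℝ Φ (c*z) Complex.I) / 2) := by
      simp [Complex.real_smul]; ring
    rw [e1, e2, norm_smul, norm_smul, Real.norm_eq_abs]
    rw [mul_pow, mul_pow, _root_.sq_abs]
    ring
  · have h2 : ¬ DifferentiableAt ℝ (fun y : ℂ => Φ (c * y)) z := by
      intro h
      apply hΦ
      have hinner : DifferentiableAt ℝ (fun y : ℂ => c⁻¹ * y) (c * z) :=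
        (ContinuousLinearMap.mul ℝ ℂ c⁻¹).differentiableAt
      have heq : Φ = (fun y : ℂ => Φ (c * y)) ∘ (fun y : ℂ => c⁻¹ * y) := by
        funext y; simp [Function.comp, ← mul_assoc, mul_inv_cancel₀ hcne]
      rw [heq]
      exact DifferentiableAt.comp _ (by simpa [← mul_assoc, inv_mul_cancel₀ hcne, mul_inv_cancel₀ hcne] using h) hinner
    simp only [jac, wirtZ, wirtZbar, fderiv_zero_of_not_differentiableAt hΦ,
      fderiv_zero_of_not_differentiableAt h2]
    simp

private lemma mult_scale (Φ : ℂ → ℂ) (w : ℂ) (ρ : ℝ) (hρ : ρ ∈ Set.Ioo (0:ℝ) 1)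
    (h : ∀ u ∈ disc ∩ Φ ⁻¹' {w}, ‖u‖ < ρ) :
    mult (fun z => Φ ((ρ:ℂ) * z)) w = mult Φ w := by
  obtain ⟨hρ0, hρ1⟩ := hρ
  have hρne : ρ ≠ 0 := ne_of_gt hρ0
  have hcne : ((ρ:ℂ)) ≠ 0 := by exact_mod_cast hρne
  set T := disc ∩ (fun z => Φ ((ρ:ℂ) * z)) ⁻¹' {w} with hT
  set S := disc ∩ Φ ⁻¹' {w} with hS
  have memT : ∀ z : ℂ, z ∈ T ↔ ‖z‖ < 1 ∧ Φ ((ρ:ℂ) * z) = w := by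
    intro z; simp [hT, disc, Metric.mem_ball, dist_zero_right]
  have memS : ∀ z : ℂ, z ∈ S ↔ ‖z‖ < 1 ∧ Φ z = w := by
    intro z; simp [hS, disc, Metric.mem_ball, dist_zero_right]
  have hnr : ∀ z : ℂ, ‖(ρ:ℂ) * z‖ = ρ * ‖z‖ := by
    intro z; rw [norm_mul, Complex.norm_real, Real.norm_eq_abs, abs_of_pos hρ0]
  have hto : ∀ z : ℂ, z ∈ T → (ρ:ℂ) * z ∈ S := by
    intro z hz
    rw [memT] at hz
    rw [memS]
    refine ⟨?_, hz.2⟩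
    rw [hnr]
    nlinarith [hz.1, norm_nonneg z]
  have hinv : ∀ u : ℂ, u ∈ S → (ρ:ℂ)⁻¹ * u ∈ T := by
    intro u hu
    have hu' := hu
    rw [memS] at hu'
    have hlt : ‖u‖ < ρ := h u hu
    rw [memT]
    constructor
    · rw [norm_mul, norm_inv, Complex.norm_real, Real.norm_eq_abs, abs_of_pos hρ0]
      rw [inv_mul_lt_iff₀ hρ0, mul_one]
      exact hlt
    · rw [← mul_assoc, mul_inv_cancel₀ hcne, one_mul]
      exact hu'.2
  let e : T ≃ S :=
    ⟨fun z => ⟨(ρ:ℂ) * z, hto z z.2⟩, fun u => ⟨(ρ:ℂ)⁻¹ * u, hinv u u.2⟩,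
     fun z => by ext; simp [← mul_assoc, inv_mul_cancel₀ hcne],
     fun u => by ext; simp [← mul_assoc, mul_inv_cancel₀ hcne]⟩
  have he : ∀ z : T, ((e z : ℂ)) = (ρ:ℂ) * (z : ℂ) := fun z => rfl
  calc mult (fun z => Φ ((ρ:ℂ) * z)) w
      = ∑' z : T, Real.sign (jac Φ ((ρ:ℂ) * (z:ℂ))) := by
        refine tsum_congr fun z => ?_
        rw [jac_scale Φ ρ hρne, sign_sq_mul ρ _ hρne]
    _ = ∑' z : T, (fun u : S => Real.sign (jac Φ (u:ℂ))) (e z) := by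
        refine tsum_congr fun z => ?_
        simp [he]
    _ = ∑' u : S, Real.sign (jac Φ (u:ℂ)) := e.tsum_eq (fun u : S => Real.sign (jac Φ (u:ℂ)))
    _ = mult Φ w := rfl

/-- `Φ_r(z) = Φ(rz)`; hence every fiber of `Φ_r` over `𝔻` injects into the corresponding
fiber of `Φ`, and at almost every `w` with finite `Φ`-fiber the signed multiplicities
satisfy `m_{Φ_ρ}(w) → m_Φ(w)` as `ρ ↗ 1`. -/
theorem statement17 (φ : Linf) (r : ℝ) (hr : r ∈ Set.Ioo (0 : ℝ) 1)
    (φr : Linf) (hφr : IsPoissonConv φ r φr) :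
    (∀ z ∈ disc, hext (⇑φr) z = hext (⇑φ) ((r : ℂ) * z)) ∧
      (∀ w : ℂ,
        Cardinal.mk ↥(disc ∩ (fun z => hext (⇑φ) ((r : ℂ) * z)) ⁻¹' {w}) ≤
          Cardinal.mk ↥(disc ∩ (hext (⇑φ)) ⁻¹' {w})) ∧
      ∀ᵐ w : ℂ, (disc ∩ (hext (⇑φ)) ⁻¹' {w}).Finite →
        Tendsto (fun ρ : ℝ => mult (fun z => hext (⇑φ) ((ρ : ℂ) * z)) w)
          (𝓝[Set.Ioo (0 : ℝ) 1] 1) (𝓝 (mult (hext (⇑φ)) w)) := by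
  obtain ⟨hr0, hr1⟩ := hr
  refine ⟨?_, ?_, ?_⟩
  · -- Part 1
    intro z _
    unfold hext
    congr 1
    · refine tsum_congr fun k => ?_
      rw [hφr (k : ℤ)]
      simp only [Int.natAbs_natCast]
      push_cast
      ring
    · refine tsum_congr fun k => ?_
      rw [hφr (-((k : ℤ) + 1))]
      have : (-((k : ℤ) + 1)).natAbs = k + 1 := by omega
      rw [this, map_mul, Complex.conj_ofReal]
      push_cast
      ring
  · -- Part 2
    intro w
    have hrc : ((r:ℂ)) ≠ 0 := by
      exact_mod_cast ne_of_gt hr0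
    refine Cardinal.mk_le_of_injective (f := fun z : ↥(disc ∩ (fun z => hext (⇑φ) ((r : ℂ) * z)) ⁻¹' {w}) =>
      (⟨(r:ℂ) * (z:ℂ), ?_⟩ : ↥(disc ∩ (hext (⇑φ)) ⁻¹' {w}))) ?_
    · obtain ⟨z, hz1, hz2⟩ := z
      refine ⟨?_, hz2⟩
      have h1 : ‖z‖ < 1 := by simpa [disc, dist_zero_right] using hz1
      have : ‖(r:ℂ) * z‖ = r * ‖z‖ := by
        rw [norm_mul, Complex.norm_real, Real.norm_eq_abs, abs_of_pos hr0]
      simp only [disc, Metric.mem_ball, dist_zero_right, this]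
      nlinarith [norm_nonneg z]
    · intro a b hab
      have : (r:ℂ) * (a:ℂ) = (r:ℂ) * (b:ℂ) := congrArg Subtype.val hab
      exact Subtype.ext (mul_left_cancel₀ hrc this)
  · -- Part 3
    refine Filter.Eventually.of_forall fun w hfin => ?_
    set S := disc ∩ (hext (⇑φ)) ⁻¹' {w} with hS
    have : ∃ ρ₀ : ℝ, ρ₀ < 1 ∧ ∀ u ∈ S, ‖u‖ ≤ ρ₀ := by
      classical
      refine ⟨((hfin.toFinset.sup fun u => ‖u‖₊ : NNReal) : ℝ), ?_, ?_⟩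
      · rw [show (1:ℝ) = ((1:NNReal):ℝ) by norm_num, NNReal.coe_lt_coe]
        rw [Finset.sup_lt_iff (by norm_num : (⊥ : NNReal) < 1)]
        intro u hu
        have huS : u ∈ S := hfin.mem_toFinset.mp hu
        have : ‖u‖ < 1 := by
          have := huS.1
          simpa [disc, dist_zero_right] using this
        rw [← NNReal.coe_lt_coe, coe_nnnorm]
        simpa using this
      · intro u hu
        have := Finset.le_sup (f := fun u => ‖u‖₊) (hfin.mem_toFinset.mpr hu)
        rw [← NNReal.coe_le_coe, coe_nnnorm] at this
        exact this
    obtain ⟨ρ₀, hρ₀1, hρ₀⟩ := this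
    have hev : ∀ᶠ ρ : ℝ in 𝓝[Set.Ioo (0:ℝ) 1] 1,
        mult (fun z => hext (⇑φ) ((ρ : ℂ) * z)) w = mult (hext (⇑φ)) w := by
      filter_upwards [eventually_nhdsWithin_of_eventually_nhds
        (eventually_gt_nhds hρ₀1), self_mem_nhdsWithin] with ρ h1 h2
      exact mult_scale (hext (⇑φ)) w ρ h2 fun u hu => lt_of_le_of_lt (hρ₀ u hu) h1
    exact Tendsto.congr' (Filter.EventuallyEq.symm hev) tendsto_const_nhds


end HH
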